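/- Let 𝔛 ⊂ ℂ be a discrete, closed (locally finite) set and f, g : 𝔛 → ℂ^N with g(x)ᵗ f(x) = 0 for all x ∈ 𝔛. Let m be a solution of the discrete Riemann–Hilbert problem (𝔛, −f gᵗ) and m̃ a solution of the discrete Riemann–Hilbert problem (𝔛, g fᵗ), both normalized at infinity with a common choice of data (δ, (R_k)). Then m̃(ζ)ᵗ = m(ζ)^{−1}, i.e. m(ζ) m̃(ζ)ᵗ = I, for every ζ ∈ ℂ∖𝔛. -/

import Mathlib

/-!
Put `A = m m̃ᵀ` and let `l₁`, `l₂` be the residues of `m`, `m̃` at `x ∈ 𝔛`. Write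
`m̃ = v + (ζ - x)⁻¹ l₂` with `v → H` (removable singularity of `(ζ - x) m̃`). The residue condition
`m̃ w₂ → l₂` forces `l₂ = H w₂`, and since `w₂ᵀ = -w₁`,
`(ζ - x) A = ((ζ - x) m) vᵀ - (m w₁) Hᵀ → l₁ Hᵀ - l₁ Hᵀ = 0`. Hence every singularity of `A` is
removable, and `A` extends to an entire function which tends to `I` on the circles `|ζ| = R_k`;
by the maximum modulus principle on the discs they bound, `A ≡ I`.
-/

noncomputable section

open scoped Topology

/-- Square complex matrices of size k. -/
abbrev Mat (k : ℕ) := Matrix (Fin k) (Fin k) ℂ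

/-- `m` is a solution of the discrete Riemann–Hilbert problem `(𝔛, w)`:
it is analytic on ℂ∖𝔛 (entrywise), and at every `x ∈ 𝔛` it has at most a simple pole
whose residue `l` (the limit of `(ζ−x)•m(ζ)`) equals the limit of `m(ζ)w(x)` as `ζ → x`. -/
def IsDRHPSol (k : ℕ) (𝔛 : Set ℂ) (w : 𝔛 → Mat k) (m : ℂ → Mat k) : Prop :=
  (∀ z ∉ 𝔛, ∀ i j, AnalyticAt ℂ (fun ζ => m ζ i j) z) ∧
  ∀ x : 𝔛, ∃ l : Mat k,
    Filter.Tendsto (fun ζ => m ζ * w x) (𝓝[≠] (x : ℂ)) (𝓝 l) ∧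
    Filter.Tendsto (fun ζ => (ζ - (x : ℂ)) • m ζ) (𝓝[≠] (x : ℂ)) (𝓝 l)

/-- `m` is normalized at infinity with data `(δ, R)`: `δ > 0`, `R n → ∞`, every circle
`{|ζ| = R n}` lies at distance at least `δ` from `𝔛`, and `m(ζ) → I` uniformly as
`|ζ| → ∞` over the region `{ζ : dist(ζ, 𝔛) ≥ δ}`. -/
def NormalizedAtInfty (k : ℕ) (𝔛 : Set ℂ) (m : ℂ → Mat k) (δ : ℝ) (R : ℕ → ℝ) : Prop :=
  0 < δ ∧ Filter.Tendsto R Filter.atTop Filter.atTop ∧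
  (∀ n, ∀ ζ : ℂ, ‖ζ‖ = R n → ∀ x ∈ 𝔛, δ ≤ dist ζ x) ∧
  ∀ ε > 0, ∃ M : ℝ, ∀ ζ : ℂ, M ≤ ‖ζ‖ → (∀ x ∈ 𝔛, δ ≤ dist ζ x) →
    ∀ i j, ‖m ζ i j - (1 : Mat k) i j‖ ≤ ε

open Filter Set Metric Matrix Bornology

section RemovableSingularity

variable {E : Type*} [NormedAddCommGroup E] [NormedSpace ℂ E] {x : ℂ}

lemma eq_zero_of_tendsto_inv_sub_smul {C L : E}
    (h : Tendsto (fun ζ => (ζ - x)⁻¹ • C) (𝓝[≠] x) (𝓝 L)) : L = 0 := by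
  have hsub : Tendsto (fun ζ => ζ - x) (𝓝[≠] x) (𝓝 0) :=
    tendsto_sub_nhds_zero_iff.2 (tendsto_id.mono_left nhdsWithin_le_nhds)
  have hC : C = 0 := by
    refine tendsto_nhds_unique (tendsto_const_nhds.congr' ?_) (zero_smul ℂ L ▸ hsub.smul h)
    filter_upwards [self_mem_nhdsWithin] with ζ hζ
    rw [smul_smul, mul_inv_cancel₀ (sub_ne_zero.2 hζ), one_smul]
  subst hC
  simp only [smul_zero] at h
  exact tendsto_nhds_unique h tendsto_const_nhds

lemma eq_mul_of_tendsto_mul {A : Type*} [NormedRing A] [NormedAlgebra ℂ A] {F : ℂ → A}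
    {w l H : A} (hw : Tendsto (fun ζ => F ζ * w) (𝓝[≠] x) (𝓝 l))
    (hH : Tendsto (fun ζ => F ζ - (ζ - x)⁻¹ • l) (𝓝[≠] x) (𝓝 H)) : l = H * w := by
  have h : Tendsto (fun ζ => (ζ - x)⁻¹ • (l * w)) (𝓝[≠] x) (𝓝 (l - H * w)) := by
    refine (hw.sub (hH.mul_const w)).congr fun ζ => ?_
    rw [sub_mul, smul_mul_assoc, sub_sub_cancel]
  exact sub_eq_zero.1 (eq_zero_of_tendsto_inv_sub_smul h)

variable [CompleteSpace E]

lemma exists_tendsto_sub_inv_smul {F : ℂ → E} {a : E}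
    (hd : ∀ᶠ ζ in 𝓝[≠] x, DifferentiableAt ℂ F ζ)
    (h : Tendsto (fun ζ => (ζ - x) • F ζ) (𝓝[≠] x) (𝓝 a)) :
    ∃ c, Tendsto (fun ζ => F ζ - (ζ - x)⁻¹ • a) (𝓝[≠] x) (𝓝 c) := by
  classical
  set G := Function.update (fun ζ => (ζ - x) • F ζ) x a
  have hGd : ∀ᶠ ζ in 𝓝[≠] x, DifferentiableAt ℂ G ζ := by
    filter_upwards [hd, self_mem_nhdsWithin] with ζ hζ hζx
    refine (((differentiableAt_id.sub_const x).smul hζ).congr_of_eventuallyEq ?_)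
    filter_upwards [isOpen_compl_singleton.mem_nhds hζx] with y hy
    exact Function.update_of_ne hy _ _
  have hG : DifferentiableAt ℂ G x :=
    (Complex.analyticAt_of_differentiable_on_punctured_nhds_of_continuousAt hGd
      (continuousAt_update_same.2 h)).differentiableAt
  refine ⟨deriv G x, hG.hasDerivAt.tendsto_slope.congr' ?_⟩
  filter_upwards [self_mem_nhdsWithin] with ζ hζ
  simp only [slope_def_module, G, Function.update_of_ne hζ, Function.update_self]
  rw [smul_sub, smul_smul, inv_mul_cancel₀ (sub_ne_zero.2 hζ), one_smul]

lemma exists_differentiable_eqOn_compl {𝔛 : Set ℂ} {F : ℂ → E}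
    (h𝔛 : ∀ z, ∀ᶠ ζ in 𝓝[≠] z, ζ ∉ 𝔛) (hF : ∀ z ∉ 𝔛, DifferentiableAt ℂ F z)
    (hres : ∀ x ∈ 𝔛, Tendsto (fun ζ => (ζ - x) • F ζ) (𝓝[≠] x) (𝓝 0)) :
    ∃ G : ℂ → E, Differentiable ℂ G ∧ EqOn G F 𝔛ᶜ := by
  set G := fun ζ => limUnder (𝓝[≠] ζ) F
  have hGF : EqOn G F 𝔛ᶜ := fun z hz =>
    ((hF z hz).continuousAt.tendsto.mono_left nhdsWithin_le_nhds).limUnder_eq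
  have hGF_near : ∀ z, G =ᶠ[𝓝[≠] z] F := fun z => (h𝔛 z).mono fun ζ hζ => hGF hζ
  have hG_off : ∀ z ∉ 𝔛, DifferentiableAt ℂ G z := by
    intro z hz
    refine (hF z hz).congr_of_eventuallyEq ?_
    rw [← nhdsNE_sup_pure, EventuallyEq, eventually_sup, eventually_pure]
    exact ⟨hGF_near z, hGF hz⟩
  refine ⟨G, fun z => ?_, hGF⟩
  by_cases hz : z ∈ 𝔛
  · obtain ⟨c, hc⟩ := exists_tendsto_sub_inv_smul ((h𝔛 z).mono hF) (hres z hz)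
    simp only [smul_zero, sub_zero] at hc
    have hGz : Tendsto G (𝓝[≠] z) (𝓝 (G z)) :=
      (tendsto_nhds_limUnder ⟨c, hc⟩).congr' (hGF_near z).symm
    exact (Complex.analyticAt_of_differentiable_on_punctured_nhds_of_continuousAt
      ((h𝔛 z).mono hG_off) (continuousWithinAt_compl_self.1 hGz)).differentiableAt
  · exact hG_off z hz

end RemovableSingularity

lemma Differentiable.apply_eq_of_tendsto_cobounded_inf_principal {E : Type*}
    [NormedAddCommGroup E] [NormedSpace ℂ E] {F : ℂ → E} (hF : Differentiable ℂ F)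
    {S : Set ℂ} {R : ℕ → ℝ} (hR : Tendsto R atTop atTop) (hS : ∀ n, sphere 0 (R n) ⊆ S)
    {c : E} (hc : Tendsto F (cobounded ℂ ⊓ 𝓟 S) (𝓝 c)) (z : ℂ) : F z = c := by
  refine eq_of_forall_dist_le fun ε hε => ?_
  obtain ⟨r, -, hr⟩ := ((hasBasis_cobounded_norm.inf_principal S).tendsto_iff
    nhds_basis_closedBall).1 hc ε hε
  obtain ⟨n, hn⟩ := (hR.eventually_gt_atTop (max r ‖z‖)).exists
  have hRn : 0 < R n := (norm_nonneg z).trans_lt ((le_max_right _ _).trans_lt hn)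
  rw [dist_eq_norm]
  refine Complex.norm_le_of_forall_mem_frontier_norm_le (isBounded_ball (x := 0) (r := R n))
    (hF.sub_const c).diffContOnCl (fun ζ hζ => ?_) ?_
  · rw [frontier_ball 0 hRn.ne'] at hζ
    have hζR : ‖ζ‖ = R n := by simpa using hζ
    rw [← dist_eq_norm]
    exact hr ζ ⟨(le_max_left _ _).trans (hζR ▸ hn.le), hS n hζ⟩
  · rw [closure_ball 0 hRn.ne', mem_closedBall, dist_zero_right]
    exact ((le_max_right _ _).trans_lt hn).le

lemma NormalizedAtInfty.tendsto {k : ℕ} {𝔛 : Set ℂ} {m : ℂ → Mat k} {δ : ℝ} {R : ℕ → ℝ}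
    (h : NormalizedAtInfty k 𝔛 m δ R) :
    Tendsto m (cobounded ℂ ⊓ 𝓟 {ζ | ∀ x ∈ 𝔛, δ ≤ dist ζ x}) (𝓝 1) := by
  refine tendsto_pi_nhds.2 fun i => tendsto_pi_nhds.2 fun j => ?_
  refine ((hasBasis_cobounded_norm.inf_principal _).tendsto_iff nhds_basis_closedBall).2
    fun ε hε => ?_
  obtain ⟨M, hM⟩ := h.2.2.2 ε hε
  exact ⟨M, trivial, fun ζ hζ => (mem_closedBall_iff_norm).2 (hM ζ hζ.1 hζ.2 i j)⟩

-- Any normed-algebra structure on matrices will do: only its topology, the product one, is seen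
-- by the statement.
attribute [local instance] Matrix.linftyOpNormedRing Matrix.linftyOpNormedAlgebra

section DiscreteRiemannHilbert

variable {N : ℕ}

lemma tendsto_sub_smul_mul_transpose {x : ℂ} {m mt : ℂ → Mat N} {w₁ w₂ l₁ l₂ : Mat N}
    (hw : w₂ᵀ = -w₁) (hd : ∀ᶠ ζ in 𝓝[≠] x, DifferentiableAt ℂ mt ζ)
    (hm : Tendsto (fun ζ => m ζ * w₁) (𝓝[≠] x) (𝓝 l₁))
    (hm' : Tendsto (fun ζ => (ζ - x) • m ζ) (𝓝[≠] x) (𝓝 l₁))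
    (hmt : Tendsto (fun ζ => mt ζ * w₂) (𝓝[≠] x) (𝓝 l₂))
    (hmt' : Tendsto (fun ζ => (ζ - x) • mt ζ) (𝓝[≠] x) (𝓝 l₂)) :
    Tendsto (fun ζ => (ζ - x) • (m ζ * (mt ζ)ᵀ)) (𝓝[≠] x) (𝓝 0) := by
  obtain ⟨H, hH⟩ := exists_tendsto_sub_inv_smul hd hmt'
  have hl₂ : l₂ = H * w₂ := eq_mul_of_tendsto_mul hmt hH
  have hHT : Tendsto (fun ζ => (mt ζ - (ζ - x)⁻¹ • l₂)ᵀ) (𝓝[≠] x) (𝓝 Hᵀ) :=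
    (continuous_id.matrix_transpose.tendsto H).comp hH
  have hlim := (hm'.mul hHT).sub (hm.mul_const Hᵀ)
  rw [sub_self] at hlim
  refine hlim.congr' ?_
  -- `((ζ - x) m) (mt - (ζ - x)⁻¹ H w₂)ᵀ = (ζ - x) m mtᵀ + m w₁ Hᵀ`, as `w₂ᵀ = -w₁`
  filter_upwards [self_mem_nhdsWithin] with ζ hζ
  simp only [hl₂, transpose_sub, transpose_smul, transpose_mul, hw, neg_mul, smul_neg, mul_sub,
    mul_neg, smul_mul_assoc, mul_smul_comm, smul_smul, inv_mul_cancel₀ (sub_ne_zero.2 hζ),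
    one_smul, Matrix.mul_assoc]
  abel

namespace IsDRHPSol

variable {𝔛 : Set ℂ} {w w₁ w₂ : 𝔛 → Mat N} {m mt : ℂ → Mat N} {z : ℂ}

lemma differentiableAt (h : IsDRHPSol N 𝔛 w m) (hz : z ∉ 𝔛) : DifferentiableAt ℂ m z :=
  differentiableAt_pi.2 fun i => differentiableAt_pi.2 fun j => (h.1 z hz i j).differentiableAt

lemma differentiableAt_transpose (h : IsDRHPSol N 𝔛 w m) (hz : z ∉ 𝔛) :
    DifferentiableAt ℂ (fun ζ => (m ζ)ᵀ) z :=
  differentiableAt_pi.2 fun i => differentiableAt_pi.2 fun j => (h.1 z hz j i).differentiableAt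

lemma tendsto_sub_smul_mul_transpose (h𝔛 : ∀ z, ∀ᶠ ζ in 𝓝[≠] z, ζ ∉ 𝔛)
    (h₁ : IsDRHPSol N 𝔛 w₁ m) (h₂ : IsDRHPSol N 𝔛 w₂ mt) (x : 𝔛) (hw : (w₂ x)ᵀ = -w₁ x) :
    Tendsto (fun ζ => (ζ - (x : ℂ)) • (m ζ * (mt ζ)ᵀ)) (𝓝[≠] (x : ℂ)) (𝓝 0) := by
  obtain ⟨l₁, hm, hm'⟩ := h₁.2 x
  obtain ⟨l₂, hmt, hmt'⟩ := h₂.2 x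
  exact _root_.tendsto_sub_smul_mul_transpose hw ((h𝔛 x).mono fun ζ hζ => h₂.differentiableAt hζ)
    hm hm' hmt hmt'

end IsDRHPSol

end DiscreteRiemannHilbert

theorem statement11 (𝔛 : Set ℂ) (hdisc : DiscreteTopology 𝔛) (hclosed : IsClosed 𝔛)
    (N : ℕ) (f g : 𝔛 → Fin N → ℂ)
    (w₁ w₂ : 𝔛 → Mat N)
    (hw₁ : ∀ x : 𝔛, w₁ x = Matrix.of fun i j => -(f x i * g x j))
    (hw₂ : ∀ x : 𝔛, w₂ x = Matrix.of fun i j => g x i * f x j)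
    (m mt : ℂ → Mat N)
    (h₁ : IsDRHPSol N 𝔛 w₁ m) (h₂ : IsDRHPSol N 𝔛 w₂ mt)
    (δ : ℝ) (R : ℕ → ℝ)
    (hn₁ : NormalizedAtInfty N 𝔛 m δ R) (hn₂ : NormalizedAtInfty N 𝔛 mt δ R) :
    ∀ ζ ∉ 𝔛, m ζ * (mt ζ).transpose = 1 := by
  have h𝔛 : ∀ z, ∀ᶠ ζ in 𝓝[≠] z, ζ ∉ 𝔛 := fun z => disjoint_principal_right.1
    (isClosed_and_discrete_iff.1 ⟨hclosed, isDiscrete_iff_discreteTopology.2 hdisc⟩ z)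
  have hw : ∀ x, (w₂ x)ᵀ = -w₁ x := fun x => by ext i j; simp [hw₁, hw₂, mul_comm]
  obtain ⟨G, hG, hGA⟩ := exists_differentiable_eqOn_compl (F := fun ζ => m ζ * (mt ζ)ᵀ) h𝔛
    (fun z hz => (h₁.differentiableAt hz).mul (h₂.differentiableAt_transpose hz))
    fun x hx => h₁.tendsto_sub_smul_mul_transpose h𝔛 h₂ ⟨x, hx⟩ (hw _)
  set S := {ζ : ℂ | ∀ x ∈ 𝔛, δ ≤ dist ζ x}
  have hS : S ⊆ 𝔛ᶜ := fun ζ hζ hζ𝔛 => (hn₁.1.trans_le (hζ ζ hζ𝔛)).ne' (dist_self ζ)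
  have hG1 : Tendsto G (cobounded ℂ ⊓ 𝓟 S) (𝓝 1) := by
    have hA := hn₁.tendsto.mul ((continuous_id.matrix_transpose.tendsto 1).comp hn₂.tendsto)
    rw [id, transpose_one, mul_one] at hA
    exact hA.congr' (eventually_inf_principal.2 (.of_forall fun ζ hζ => (hGA (hS hζ)).symm))
  exact fun ζ hζ => (hGA hζ).symm.trans <| hG.apply_eq_of_tendsto_cobounded_inf_principal
    hn₁.2.1 (fun n ζ hζ => hn₁.2.2.1 n ζ (by simpa using hζ)) hG1 ζ
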